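/- arXiv:1505.00108 — 2 statements merged into one kernel-verified Lean document; each statement's English description precedes it below -/
import Mathlib

section
/- Let s > 3/2 be a real number. There exists a constant C, depending only on s, such that for every measurable function g : ℝ³ → [0, ∞] one has ∫_{ℝ³} ∫_{ℝ³} ∫_{{η : |ξ − x − η| ≤ |η|/2}} (1 + |ξ|²)^{-s} (1 + |x|²)^{-2s} (1 + |ξ − x − η|²)^{-s} g(η) dη dx dξ ≤ C ∫_{ℝ³} (1 + |η|²)^{-s} g(η) dη. -/
open MeasureTheory ENNReal

section Aux

local notation "E" => EuclideanSpace ℝ (Fin 3)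

private lemma aux_w_meas (s : ℝ) :
    Measurable fun x : E => ENNReal.ofReal ((1 + ‖x‖ ^ 2) ^ (-s)) := by
  have h1 : Continuous fun x : E => ((1 + ‖x‖ ^ 2 : ℝ) ^ (-s)) :=
    Continuous.rpow_const (by fun_prop) (fun x => Or.inl (by positivity))
  exact h1.measurable.ennreal_ofReal

private lemma aux_I_lt_top (s : ℝ) (hs : 3 / 2 < s) :
    (∫⁻ x : E, ENNReal.ofReal ((1 + ‖x‖ ^ 2) ^ (-s))) < ⊤ := by
  have h2s : (Module.finrank ℝ E : ℝ) < 2 * s := by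
    simp [EuclideanSpace, finrank_euclideanSpace_fin]
    linarith
  have hfin := finite_integral_one_add_norm (μ := (volume : Measure E)) h2s
  calc (∫⁻ x : E, ENNReal.ofReal ((1 + ‖x‖ ^ 2) ^ (-s)))
      ≤ ∫⁻ x : E, ENNReal.ofReal ((2:ℝ) ^ s) * ENNReal.ofReal ((1 + ‖x‖) ^ (-(2*s))) := by
        refine lintegral_mono fun x => ?_
        rw [← ENNReal.ofReal_mul (by positivity)]
        refine ENNReal.ofReal_le_ofReal ?_
        have := rpow_neg_one_add_norm_sq_le (r := 2 * s) x (by linarith)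
        have h1 : -(2*s)/2 = -s := by ring
        have h2 : (2*s)/2 = s := by ring
        rw [h1, h2] at this
        exact this
    _ = ENNReal.ofReal ((2:ℝ) ^ s) * ∫⁻ x : E, ENNReal.ofReal ((1 + ‖x‖) ^ (-(2*s))) :=
        lintegral_const_mul' _ _ ENNReal.ofReal_ne_top
    _ < ⊤ := ENNReal.mul_lt_top ENNReal.ofReal_lt_top hfin

private lemma aux_pointwise (s : ℝ) (hs : 3 / 2 < s) (ξ x η : E)
    (h : ‖ξ - x - η‖ ≤ ‖η‖ / 2) :
    (1 + ‖ξ‖ ^ 2) ^ (-s) * (1 + ‖x‖ ^ 2) ^ (-(2 * s)) ≤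
      (8:ℝ) ^ s * ((1 + ‖η‖ ^ 2) ^ (-s) * (1 + ‖x‖ ^ 2) ^ (-s)) := by
  have hs0 : (0:ℝ) ≤ s := by linarith
  set A : ℝ := 1 + ‖ξ‖ ^ 2 with hAdef
  set B : ℝ := 1 + ‖x‖ ^ 2 with hBdef
  set H : ℝ := 1 + ‖η‖ ^ 2 with hHdef
  have hA : (0:ℝ) < A := by positivity
  have hB : (0:ℝ) < B := by positivity
  have hH : (0:ℝ) < H := by positivity
  -- ‖η‖ ≤ 2 ‖ξ - x‖
  have hη : ‖η‖ ≤ 2 * ‖ξ - x‖ := by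
    have h1 : ‖η‖ ≤ ‖ξ - x‖ + ‖ξ - x - η‖ := by
      have h2 : (ξ - x) - (ξ - x - η) = η := by abel
      calc ‖η‖ = ‖(ξ - x) - (ξ - x - η)‖ := by rw [h2]
        _ ≤ ‖ξ - x‖ + ‖ξ - x - η‖ := norm_sub_le _ _
    linarith
  have hξx : ‖ξ - x‖ ≤ ‖ξ‖ + ‖x‖ := norm_sub_le _ _
  have hHle : H ≤ 8 * A * B := by
    have h1 : ‖η‖ ^ 2 ≤ 4 * ‖ξ - x‖ ^ 2 := by nlinarith [norm_nonneg η, norm_nonneg (ξ - x)]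
    have h2 : ‖ξ - x‖ ^ 2 ≤ 2 * (‖ξ‖ ^ 2 + ‖x‖ ^ 2) := by
      nlinarith [norm_nonneg (ξ - x), norm_nonneg ξ, norm_nonneg x, sq_nonneg (‖ξ‖ - ‖x‖)]
    simp only [hAdef, hBdef, hHdef]
    nlinarith [sq_nonneg (‖ξ‖ * ‖x‖), norm_nonneg ξ, norm_nonneg x]
  have key : H ^ s ≤ 8 ^ s * A ^ s * B ^ s := by
    calc H ^ s ≤ (8 * A * B) ^ s := Real.rpow_le_rpow hH.le hHle hs0
      _ = 8 ^ s * A ^ s * B ^ s := by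
          rw [Real.mul_rpow (by positivity) hB.le, Real.mul_rpow (by norm_num) hA.le]

  have ha : (0:ℝ) < A ^ s := Real.rpow_pos_of_pos hA s
  have hb : (0:ℝ) < B ^ s := Real.rpow_pos_of_pos hB s
  have hh : (0:ℝ) < H ^ s := Real.rpow_pos_of_pos hH s
  have h8 : (0:ℝ) < (8:ℝ) ^ s := Real.rpow_pos_of_pos (by norm_num) s
  simp only [Real.rpow_neg hA.le, Real.rpow_neg hB.le, Real.rpow_neg hH.le]
  rw [show (2:ℝ) * s = s + s by ring, Real.rpow_add hB]
  have hinv : ((8:ℝ) ^ s * A ^ s * B ^ s)⁻¹ ≤ (H ^ s)⁻¹ :=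
    inv_anti₀ hh key
  calc (A ^ s)⁻¹ * (B ^ s * B ^ s)⁻¹
      = (8:ℝ) ^ s * (((8:ℝ) ^ s * A ^ s * B ^ s)⁻¹ * (B ^ s)⁻¹) := by
        field_simp
    _ ≤ (8:ℝ) ^ s * ((H ^ s)⁻¹ * (B ^ s)⁻¹) := by gcongr

/-- for `s > 3/2` there is a finite constant `C` depending only on
`s` such that for every measurable `g : ℝ³ → [0,∞]`,
`∫∫∫_{|ξ-x-η| ≤ |η|/2} ⟨ξ⟩^{-2s}⟨x⟩^{-4s}⟨ξ-x-η⟩^{-2s} g(η) dη dx dξ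
  ≤ C ∫ ⟨η⟩^{-2s} g(η) dη`. -/
theorem stmt_15 (s : ℝ) (hs : 3 / 2 < s) :
    ∃ C : ℝ≥0∞, C ≠ ⊤ ∧
      ∀ g : EuclideanSpace ℝ (Fin 3) → ℝ≥0∞, Measurable g →
        (∫⁻ ξ, ∫⁻ x, ∫⁻ η in {η : EuclideanSpace ℝ (Fin 3) | ‖ξ - x - η‖ ≤ ‖η‖ / 2},
            ENNReal.ofReal ((1 + ‖ξ‖ ^ 2) ^ (-s)) *
              ENNReal.ofReal ((1 + ‖x‖ ^ 2) ^ (-(2 * s))) *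
              ENNReal.ofReal ((1 + ‖ξ - x - η‖ ^ 2) ^ (-s)) * g η) ≤
          C * ∫⁻ η, ENNReal.ofReal ((1 + ‖η‖ ^ 2) ^ (-s)) * g η := by
  classical
  set w : E → ℝ≥0∞ := fun x => ENNReal.ofReal ((1 + ‖x‖ ^ 2) ^ (-s)) with hw
  have hwm : Measurable w := aux_w_meas s
  set I : ℝ≥0∞ := ∫⁻ x : E, w x with hI
  have hIlt : I < ⊤ := aux_I_lt_top s hs
  set c : ℝ≥0∞ := ENNReal.ofReal ((8:ℝ) ^ s) with hc
  refine ⟨c * I * I, by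
    exact ENNReal.mul_ne_top (ENNReal.mul_ne_top ENNReal.ofReal_ne_top hIlt.ne) hIlt.ne,
    fun g hg => ?_⟩
  set wg : E → ℝ≥0∞ := fun η => w η * g η with hwg
  have hwgm : Measurable wg := hwm.mul hg
  -- the convolution T z = ∫ w (z - η) * wg η
  set T : E → ℝ≥0∞ := fun z => ∫⁻ η : E, w (z - η) * wg η with hT
  have hTm : Measurable T := by
    apply Measurable.lintegral_prod_right (f := fun z η => w (z - η) * wg η)
    exact ((hwm.comp measurable_sub).mul (hwgm.comp measurable_snd))
  -- Step 1: pointwise bound of inner set-integral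
  have step1 : ∀ ξ x : E,
      (∫⁻ η in {η : E | ‖ξ - x - η‖ ≤ ‖η‖ / 2},
        ENNReal.ofReal ((1 + ‖ξ‖ ^ 2) ^ (-s)) *
          ENNReal.ofReal ((1 + ‖x‖ ^ 2) ^ (-(2 * s))) *
          ENNReal.ofReal ((1 + ‖ξ - x - η‖ ^ 2) ^ (-s)) * g η) ≤
      c * (w x * T (ξ - x)) := by
    intro ξ x
    have hset : MeasurableSet {η : E | ‖ξ - x - η‖ ≤ ‖η‖ / 2} := by
      apply measurableSet_le <;> fun_prop
    calc (∫⁻ η in {η : E | ‖ξ - x - η‖ ≤ ‖η‖ / 2},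
            ENNReal.ofReal ((1 + ‖ξ‖ ^ 2) ^ (-s)) *
              ENNReal.ofReal ((1 + ‖x‖ ^ 2) ^ (-(2 * s))) *
              ENNReal.ofReal ((1 + ‖ξ - x - η‖ ^ 2) ^ (-s)) * g η)
        ≤ ∫⁻ η in {η : E | ‖ξ - x - η‖ ≤ ‖η‖ / 2},
            c * (w x * (w (ξ - x - η) * wg η)) := by
          refine setLIntegral_mono' hset fun η hη => ?_
          have hb := aux_pointwise s hs ξ x η hη
          have h1 : ENNReal.ofReal ((1 + ‖ξ‖ ^ 2) ^ (-s)) *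
              ENNReal.ofReal ((1 + ‖x‖ ^ 2) ^ (-(2 * s))) ≤
              c * (w η * w x) := by
            rw [hc, hw, ← ENNReal.ofReal_mul (by positivity),
              ← ENNReal.ofReal_mul (by positivity), ← ENNReal.ofReal_mul (by positivity)]
            exact ENNReal.ofReal_le_ofReal hb
          calc ENNReal.ofReal ((1 + ‖ξ‖ ^ 2) ^ (-s)) *
                ENNReal.ofReal ((1 + ‖x‖ ^ 2) ^ (-(2 * s))) *
                ENNReal.ofReal ((1 + ‖ξ - x - η‖ ^ 2) ^ (-s)) * g η
              ≤ c * (w η * w x) * ENNReal.ofReal ((1 + ‖ξ - x - η‖ ^ 2) ^ (-s)) * g η := by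
                gcongr
            _ = c * (w x * (w (ξ - x - η) * wg η)) := by
                simp only [hw, hwg]; ring
      _ ≤ ∫⁻ η : E, c * (w x * (w (ξ - x - η) * wg η)) := by
          exact setLIntegral_le_lintegral _ _
      _ = c * (w x * T (ξ - x)) := by
          rw [lintegral_const_mul' _ _ ENNReal.ofReal_ne_top,
            lintegral_const_mul' _ _ ENNReal.ofReal_ne_top]
  -- Step 2: compute ∫ T = I * ∫ wg
  have hTint : (∫⁻ z : E, T z) = I * ∫⁻ η : E, wg η := by
    rw [hT]
    rw [lintegral_lintegral_swap
      (((hwm.comp measurable_sub).mul (hwgm.comp measurable_snd)).aemeasurable)]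
    have : ∀ η : E, (∫⁻ z : E, w (z - η) * wg η) = I * wg η := by
      intro η
      rw [lintegral_mul_const (wg η) (f := fun z : E => w (z - η))
          (hwm.comp (measurable_sub_const η)),
        lintegral_sub_right_eq_self w η]
    simp_rw [this]
    rw [lintegral_const_mul' _ _ hIlt.ne]
  -- Step 3: main chain
  calc (∫⁻ ξ : E, ∫⁻ x : E, ∫⁻ η in {η : E | ‖ξ - x - η‖ ≤ ‖η‖ / 2},
          ENNReal.ofReal ((1 + ‖ξ‖ ^ 2) ^ (-s)) *
            ENNReal.ofReal ((1 + ‖x‖ ^ 2) ^ (-(2 * s))) *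
            ENNReal.ofReal ((1 + ‖ξ - x - η‖ ^ 2) ^ (-s)) * g η)
      ≤ ∫⁻ ξ : E, ∫⁻ x : E, c * (w x * T (ξ - x)) :=
        lintegral_mono fun ξ => lintegral_mono fun x => step1 ξ x
    _ = c * ∫⁻ ξ : E, ∫⁻ x : E, w x * T (ξ - x) := by
        simp_rw [lintegral_const_mul' c _ ENNReal.ofReal_ne_top]
    _ = c * ∫⁻ x : E, ∫⁻ ξ : E, w x * T (ξ - x) := by
        congr 1
        exact lintegral_lintegral_swap
          (((hwm.comp measurable_snd).mul
            (hTm.comp (measurable_fst.sub measurable_snd))).aemeasurable)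
    _ = c * ∫⁻ x : E, w x * ∫⁻ ξ : E, T (ξ - x) := by
        congr 1
        exact lintegral_congr fun x => lintegral_const_mul' _ _ ENNReal.ofReal_ne_top
    _ = c * ∫⁻ x : E, w x * (I * ∫⁻ η : E, wg η) := by
        congr 1
        refine lintegral_congr fun x => ?_
        rw [lintegral_sub_right_eq_self T x, hTint]
    _ = c * I * I * ∫⁻ η : E, wg η := by
        rw [lintegral_mul_const _ hwm]
        ring
end Aux
end

section
/- Let s > 3/2 be a real number. There exists a constant C, depending only on s, such that for every measurable function g : ℝ³ → [0, ∞] one has ∫_{ℝ³} (1 + |ξ|²)^{-s} Q(ξ)² dξ ≤ C ∫_{ℝ³} (1 + |η|²)^{-s} g(η) dη, where Q(ξ)² = ∫_{ℝ³} (1 + |x|²)^{-2s} ∫_{ℝ³} (1 + |−η + ξ − x|²)^{-s} g(η) dη dx. -/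
open MeasureTheory ENNReal

namespace Stmt16Aux

noncomputable def w (σ : ℝ) (ξ : EuclideanSpace ℝ (Fin 3)) : ℝ≥0∞ :=
  ENNReal.ofReal ((1 + ‖ξ‖ ^ 2) ^ (-σ))

lemma w_cont (σ : ℝ) : Continuous (w σ) := by
  apply ENNReal.continuous_ofReal.comp
  apply Continuous.rpow_const (by continuity)
  intro x; left; positivity

lemma w_meas (σ : ℝ) : Measurable (w σ) := (w_cont σ).measurable

lemma key_real (a b : ℝ) (hb : 0 < b) (hab : b ≤ a) (v x : EuclideanSpace ℝ (Fin 3)) :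
    (1 + ‖x‖ ^ 2) ^ (-a) * (1 + ‖v - x‖ ^ 2) ^ (-b) ≤
      (4 : ℝ) ^ b * ((1 + ‖v‖ ^ 2) ^ (-b) *
        ((1 + ‖x‖ ^ 2) ^ (-b) + (1 + ‖v - x‖ ^ 2) ^ (-b))) := by
  set p := 1 + ‖x‖ ^ 2 with hpdef
  set q := 1 + ‖v - x‖ ^ 2 with hqdef
  set r := 1 + ‖v‖ ^ 2 with hrdef
  have hp1 : (1:ℝ) ≤ p := by nlinarith [sq_nonneg ‖x‖]
  have hq1 : (1:ℝ) ≤ q := by nlinarith [sq_nonneg ‖v - x‖]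
  have hr1 : (1:ℝ) ≤ r := by nlinarith [sq_nonneg ‖v‖]
  have hp0 : (0:ℝ) < p := lt_of_lt_of_le one_pos hp1
  have hq0 : (0:ℝ) < q := lt_of_lt_of_le one_pos hq1
  have hr0 : (0:ℝ) < r := lt_of_lt_of_le one_pos hr1
  have hvn : ‖v‖ ≤ ‖x‖ + ‖v - x‖ := by
    have h := norm_add_le x (v - x)
    simpa using h
  have bound : ∀ t : ℝ, 0 < t → r ≤ 4 * t → t ^ (-b) ≤ 4 ^ b * r ^ (-b) := by
    intro t ht hrt
    have h4 : r / 4 ≤ t := by linarith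
    have h0 : (0:ℝ) < r / 4 := by linarith
    calc t ^ (-b) ≤ (r / 4) ^ (-b) :=
          Real.rpow_le_rpow_of_nonpos h0 h4 (neg_nonpos.mpr hb.le)
      _ = r ^ (-b) / 4 ^ (-b) := Real.div_rpow hr0.le (by norm_num : (0:ℝ) ≤ 4) (-b)
      _ = 4 ^ b * r ^ (-b) := by
          rw [Real.rpow_neg (by norm_num : (0:ℝ) ≤ 4)]
          field_simp
  have hpa : p ^ (-a) ≤ p ^ (-b) :=
    Real.rpow_le_rpow_of_exponent_le hp1 (by linarith)
  have hppos : (0:ℝ) ≤ p ^ (-b) := Real.rpow_nonneg hp0.le _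
  have hqpos : (0:ℝ) ≤ q ^ (-b) := Real.rpow_nonneg hq0.le _
  have hrpos : (0:ℝ) ≤ r ^ (-b) := Real.rpow_nonneg hr0.le _
  have hpapos : (0:ℝ) ≤ p ^ (-a) := Real.rpow_nonneg hp0.le _
  have h4pos : (0:ℝ) < 4 ^ b := Real.rpow_pos_of_pos (by norm_num) _
  rcases le_total ‖x‖ ‖v - x‖ with h | h
  · -- then q is big : r ≤ 4 q
    have hrq : r ≤ 4 * q := by
      have h2 : ‖v‖ ^ 2 ≤ 4 * ‖v - x‖ ^ 2 := by nlinarith [norm_nonneg v, norm_nonneg (v - x)]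
      nlinarith
    have h2 : q ^ (-b) ≤ 4 ^ b * r ^ (-b) := bound q hq0 hrq
    calc p ^ (-a) * q ^ (-b) ≤ p ^ (-b) * (4 ^ b * r ^ (-b)) :=
          mul_le_mul hpa h2 hqpos hppos
      _ = 4 ^ b * (r ^ (-b) * p ^ (-b)) := by ring
      _ ≤ 4 ^ b * (r ^ (-b) * (p ^ (-b) + q ^ (-b))) := by nlinarith
  · have hrp : r ≤ 4 * p := by
      have h2 : ‖v‖ ^ 2 ≤ 4 * ‖x‖ ^ 2 := by nlinarith [norm_nonneg v, norm_nonneg x]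
      nlinarith
    have h2 : p ^ (-b) ≤ 4 ^ b * r ^ (-b) := bound p hp0 hrp
    calc p ^ (-a) * q ^ (-b) ≤ (4 ^ b * r ^ (-b)) * q ^ (-b) :=
          mul_le_mul (hpa.trans h2) le_rfl hqpos (by positivity)
      _ = 4 ^ b * (r ^ (-b) * q ^ (-b)) := by ring
      _ ≤ 4 ^ b * (r ^ (-b) * (p ^ (-b) + q ^ (-b))) := by nlinarith

lemma Ib_ne_top (b : ℝ) (hb : 3 / 2 < b) : (∫⁻ x, w b x) ≠ ⊤ := by
  have h3 : (Module.finrank ℝ (EuclideanSpace ℝ (Fin 3)) : ℝ) < 2 * b := by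
    rw [finrank_euclideanSpace_fin]
    push_cast
    linarith
  have hint := integrable_rpow_neg_one_add_norm_sq
    (E := EuclideanSpace ℝ (Fin 3)) (μ := volume) h3
  have heq : ∀ x : EuclideanSpace ℝ (Fin 3), -(2*b) / 2 = -b := fun _ => by ring
  have hfin := hint.hasFiniteIntegral
  rw [HasFiniteIntegral] at hfin
  refine ne_of_lt (lt_of_le_of_lt (lintegral_mono fun x => ?_) hfin)
  unfold w
  calc ENNReal.ofReal ((1 + ‖x‖ ^ 2) ^ (-b))
      ≤ (‖(1 + ‖x‖ ^ 2) ^ (-b)‖₊ : ℝ≥0∞) := Real.ofReal_le_enorm _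
    _ = (‖(1 + ‖x‖ ^ 2) ^ (-(2*b)/2)‖₊ : ℝ≥0∞) := by rw [heq x]

lemma key (a b : ℝ) (hb : 3 / 2 < b) (hab : b ≤ a) :
    ∃ K : ℝ≥0∞, K ≠ ⊤ ∧
      ∀ v : EuclideanSpace ℝ (Fin 3), ∫⁻ x, w a x * w b (v - x) ≤ K * w b v := by
  set Ib := ∫⁻ x, w b x with hIbdef
  have hIb : Ib ≠ ⊤ := Ib_ne_top b hb
  refine ⟨ENNReal.ofReal ((4:ℝ) ^ b) * (2 * Ib), ?_, ?_⟩
  · exact ENNReal.mul_ne_top ofReal_ne_top (ENNReal.mul_ne_top (by norm_num) hIb)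
  intro v
  have hb0 : (0:ℝ) < b := by linarith
  have htrans : ∫⁻ x, w b (v - x) = Ib :=
    (Measure.measurePreserving_sub_left volume v).lintegral_comp (w_meas b)
  have hmeas2 : Measurable fun x : EuclideanSpace ℝ (Fin 3) => w b (v - x) :=
    (w_meas b).comp (measurable_const.sub measurable_id)
  have hpoint : ∀ x : EuclideanSpace ℝ (Fin 3),
      w a x * w b (v - x) ≤
        (ENNReal.ofReal ((4:ℝ) ^ b) * w b v) * (w b x + w b (v - x)) := by
    intro x
    unfold w
    rw [← ENNReal.ofReal_mul (Real.rpow_nonneg (by positivity) _),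
        ← ENNReal.ofReal_add (Real.rpow_nonneg (by positivity) _)
          (Real.rpow_nonneg (by positivity) _),
        ← ENNReal.ofReal_mul (Real.rpow_nonneg (by positivity) _),
        ← ENNReal.ofReal_mul (by positivity)]
    exact ENNReal.ofReal_le_ofReal
      (by rw [mul_assoc]; exact key_real a b hb0 hab v x)
  calc ∫⁻ x, w a x * w b (v - x)
      ≤ ∫⁻ x, (ENNReal.ofReal ((4:ℝ) ^ b) * w b v) * (w b x + w b (v - x)) :=
        lintegral_mono hpoint
    _ = (ENNReal.ofReal ((4:ℝ) ^ b) * w b v) * ∫⁻ x, (w b x + w b (v - x)) :=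
        lintegral_const_mul _ ((w_meas b).add hmeas2)
    _ = (ENNReal.ofReal ((4:ℝ) ^ b) * w b v) * (Ib + Ib) := by
        rw [lintegral_add_left (w_meas b), htrans]
    _ = (ENNReal.ofReal ((4:ℝ) ^ b) * (2 * Ib)) * w b v := by ring

end Stmt16Aux

open Stmt16Aux in
/-- weighted convolution estimate (3.17): for `s > 3/2` there is
a finite constant `C` depending only on `s` such that for every measurable
`g : ℝ³ → [0,∞]`, with `Q(ξ)² = ∫ ⟨x⟩^{-4s} ∫ ⟨-η+ξ-x⟩^{-2s} g(η) dη dx`,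
one has `∫ ⟨ξ⟩^{-2s} Q(ξ)² dξ ≤ C ∫ ⟨η⟩^{-2s} g(η) dη`. -/
theorem stmt_16 (s : ℝ) (hs : 3 / 2 < s) :
    ∃ C : ℝ≥0∞, C ≠ ⊤ ∧
      ∀ g : EuclideanSpace ℝ (Fin 3) → ℝ≥0∞, Measurable g →
        (∫⁻ ξ, ENNReal.ofReal ((1 + ‖ξ‖ ^ 2) ^ (-s)) *
            ∫⁻ x, ENNReal.ofReal ((1 + ‖x‖ ^ 2) ^ (-(2 * s))) *
              ∫⁻ η, ENNReal.ofReal ((1 + ‖-η + ξ - x‖ ^ 2) ^ (-s)) * g η) ≤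
          C * ∫⁻ η, ENNReal.ofReal ((1 + ‖η‖ ^ 2) ^ (-s)) * g η := by
  obtain ⟨K1, hK1, hkey1⟩ := key (2 * s) s hs (by linarith)
  obtain ⟨K2, hK2, hkey2⟩ := key s s hs le_rfl
  refine ⟨K1 * K2, ENNReal.mul_ne_top hK1 hK2, ?_⟩
  intro g hg
  show (∫⁻ ξ, w s ξ * ∫⁻ x, w (2 * s) x * ∫⁻ η, w s (-η + ξ - x) * g η) ≤
      K1 * K2 * ∫⁻ η, w s η * g η
  have hws := w_meas s
  have hw2s := w_meas (2 * s)
  have harg : ∀ ξ x η : EuclideanSpace ℝ (Fin 3), -η + ξ - x = (ξ - η) - x := by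
    intros; abel
  have hwsymm : ∀ (σ : ℝ) (u v : EuclideanSpace ℝ (Fin 3)), w σ (u - v) = w σ (v - u) := by
    intros σ u v; unfold w; rw [norm_sub_rev]
  -- Step 1: for each ξ, rewrite as an integral over η
  have step1 : ∀ ξ, (w s ξ * ∫⁻ x, w (2 * s) x * ∫⁻ η, w s (-η + ξ - x) * g η)
      = ∫⁻ η, (w s ξ * g η) * ∫⁻ x, w (2 * s) x * w s (-η + ξ - x) := by
    intro ξ
    have hcmap : ∀ x, Measurable fun η : EuclideanSpace ℝ (Fin 3) => -η + ξ - x :=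
      fun x => ((measurable_id.neg.add_const ξ).sub_const x)
    have hc2 : Measurable fun p : EuclideanSpace ℝ (Fin 3) × EuclideanSpace ℝ (Fin 3) =>
        -p.2 + ξ - p.1 := (measurable_snd.neg.add_const ξ).sub measurable_fst
    have hc3 : Measurable fun p : EuclideanSpace ℝ (Fin 3) × EuclideanSpace ℝ (Fin 3) =>
        -p.1 + ξ - p.2 := (measurable_fst.neg.add_const ξ).sub measurable_snd
    have hF : Measurable fun p : EuclideanSpace ℝ (Fin 3) × EuclideanSpace ℝ (Fin 3) =>
        w (2 * s) p.1 * (w s (-p.2 + ξ - p.1) * g p.2) :=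
      (hw2s.comp measurable_fst).mul ((hws.comp hc2).mul (hg.comp measurable_snd))
    have e1 : ∀ x : EuclideanSpace ℝ (Fin 3),
        w (2 * s) x * ∫⁻ η, w s (-η + ξ - x) * g η
          = ∫⁻ η, w (2 * s) x * (w s (-η + ξ - x) * g η) :=
      fun x => (lintegral_const_mul _ (((hws.comp (hcmap x))).mul hg)).symm
    have hη' : Measurable fun η : EuclideanSpace ℝ (Fin 3) =>
        ∫⁻ x, w (2 * s) x * (w s (-η + ξ - x) * g η) := by
      apply Measurable.lintegral_prod_right'
        (f := fun p : EuclideanSpace ℝ (Fin 3) × EuclideanSpace ℝ (Fin 3) =>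
          w (2 * s) p.2 * (w s (-p.1 + ξ - p.2) * g p.1))
      exact (hw2s.comp measurable_snd).mul ((hws.comp hc3).mul (hg.comp measurable_fst))
    calc w s ξ * ∫⁻ x, w (2 * s) x * ∫⁻ η, w s (-η + ξ - x) * g η
        = w s ξ * ∫⁻ x, ∫⁻ η, w (2 * s) x * (w s (-η + ξ - x) * g η) := by
          rw [lintegral_congr e1]
      _ = w s ξ * ∫⁻ η, ∫⁻ x, w (2 * s) x * (w s (-η + ξ - x) * g η) := by
          rw [lintegral_lintegral_swap hF.aemeasurable]
      _ = ∫⁻ η, w s ξ * ∫⁻ x, w (2 * s) x * (w s (-η + ξ - x) * g η) :=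
          (lintegral_const_mul _ hη').symm
      _ = ∫⁻ η, (w s ξ * g η) * ∫⁻ x, w (2 * s) x * w s (-η + ξ - x) := by
          refine lintegral_congr fun η => ?_
          have hmx : Measurable fun x : EuclideanSpace ℝ (Fin 3) =>
              w (2 * s) x * w s (-η + ξ - x) :=
            hw2s.mul (hws.comp (measurable_const.sub measurable_id))
          have : ∫⁻ x, w (2 * s) x * (w s (-η + ξ - x) * g η)
              = (∫⁻ x, w (2 * s) x * w s (-η + ξ - x)) * g η := by
            rw [← lintegral_mul_const (f := fun x => w (2 * s) x * w s (-η + ξ - x)) (g η) hmx]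
            exact lintegral_congr fun x => by ring
          rw [this]; ring
  -- Step 2: swap the ξ and η integrals
  have hc4 : Measurable fun q :
      (EuclideanSpace ℝ (Fin 3) × EuclideanSpace ℝ (Fin 3)) × EuclideanSpace ℝ (Fin 3) =>
      -q.1.2 + q.1.1 - q.2 :=
    (((measurable_snd.comp measurable_fst).neg.add
      (measurable_fst.comp measurable_fst)).sub measurable_snd)
  have hH : Measurable fun p : EuclideanSpace ℝ (Fin 3) × EuclideanSpace ℝ (Fin 3) =>
      (w s p.1 * g p.2) * ∫⁻ x, w (2 * s) x * w s (-p.2 + p.1 - x) := by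
    refine ((hws.comp measurable_fst).mul (hg.comp measurable_snd)).mul ?_
    apply Measurable.lintegral_prod_right'
      (f := fun q : (EuclideanSpace ℝ (Fin 3) × EuclideanSpace ℝ (Fin 3)) ×
        EuclideanSpace ℝ (Fin 3) => w (2 * s) q.2 * w s (-q.1.2 + q.1.1 - q.2))
    exact (hw2s.comp measurable_snd).mul (hws.comp hc4)
  have step2 : (∫⁻ ξ, w s ξ * ∫⁻ x, w (2 * s) x * ∫⁻ η, w s (-η + ξ - x) * g η)
      = ∫⁻ η, ∫⁻ ξ, (w s ξ * g η) * ∫⁻ x, w (2 * s) x * w s (-η + ξ - x) := by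
    rw [lintegral_congr step1]
    exact lintegral_lintegral_swap hH.aemeasurable
  rw [step2]
  -- Step 3: bound for each η
  have step3 : ∀ η, (∫⁻ ξ, (w s ξ * g η) * ∫⁻ x, w (2 * s) x * w s (-η + ξ - x))
      ≤ (K1 * K2) * (w s η * g η) := by
    intro η
    have hb1 : ∀ ξ, (w s ξ * g η) * (∫⁻ x, w (2 * s) x * w s (-η + ξ - x))
        ≤ (g η * K1) * (w s ξ * w s (η - ξ)) := by
      intro ξ
      have e2 : (∫⁻ x, w (2 * s) x * w s (-η + ξ - x))
          = ∫⁻ x, w (2 * s) x * w s ((ξ - η) - x) :=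
        lintegral_congr fun x => by rw [harg]
      have := e2 ▸ hkey1 (ξ - η)
      calc (w s ξ * g η) * (∫⁻ x, w (2 * s) x * w s (-η + ξ - x))
          ≤ (w s ξ * g η) * (K1 * w s (ξ - η)) := mul_le_mul_right this _
        _ = (g η * K1) * (w s ξ * w s (η - ξ)) := by rw [hwsymm s ξ η]; ring
    calc (∫⁻ ξ, (w s ξ * g η) * ∫⁻ x, w (2 * s) x * w s (-η + ξ - x))
        ≤ ∫⁻ ξ, (g η * K1) * (w s ξ * w s (η - ξ)) := lintegral_mono hb1
      _ = (g η * K1) * ∫⁻ ξ, w s ξ * w s (η - ξ) :=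
          lintegral_const_mul _ (hws.mul (hws.comp
            (measurable_const.sub measurable_id)))
      _ ≤ (g η * K1) * (K2 * w s η) := mul_le_mul_right (hkey2 η) _
      _ = (K1 * K2) * (w s η * g η) := by ring
  calc (∫⁻ η, ∫⁻ ξ, (w s ξ * g η) * ∫⁻ x, w (2 * s) x * w s (-η + ξ - x))
      ≤ ∫⁻ η, (K1 * K2) * (w s η * g η) := lintegral_mono step3
    _ = K1 * K2 * ∫⁻ η, w s η * g η := lintegral_const_mul _ (hws.mul hg)
end
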